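/- arXiv:2006.02935 — 4 statements merged into one kernel-verified Lean document; each statement's English description precedes it below -/
import Mathlib

section
/- If S : [0,T] → Sym(n) is measurable, takes positive semi-definite values, and satisfies a·I ≤ ∫₀ᵀ S(t) dt ≤ b·I, then the piecewise-constant control S(t) = (a n / T)·eⱼeⱼᵀ on [(j-1)T/n, jT/n) satisfies ∫₀ᵀ S(t) dt = a·I, and the trajectory ω of ω' = -Sω + (ωᵀSω)ω with initial condition ω(0) = e₁ is constant, so the cost J(S, e₁) = ∫₀ᵀ ωᵀSω dt equals a. In particular, the infimum μ(a,b,T,n) of J over all admissible S and initial conditions on the sphere satisfies μ(a,b,T,n) ≤ a. -/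
open Matrix MeasureTheory intervalIntegral

/-- The set of costs `J(S,ω₀) = ∫₀ᵀ ωᵀSω dt` over admissible controls `S` (measurable,
positive semi-definite, with `a•1 ≤ ∫₀ᵀ S ≤ b•1`) and initial conditions `ω₀ ∈ 𝕊ⁿ⁻¹`,
where `ω` solves `ω' = -Sω + (ωᵀSω)ω`, `ω(0) = ω₀`. Its infimum is `μ(a,b,T,n)`. -/
def costSet (a b T : ℝ) (n : ℕ) : Set ℝ :=
  {J | ∃ (S : ℝ → Matrix (Fin n) (Fin n) ℝ) (ω : ℝ → Fin n → ℝ),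
    (∀ i j, Measurable fun t => S t i j) ∧
    (∀ t ∈ Set.Icc (0:ℝ) T, (S t).PosSemidef) ∧
    ((Matrix.of fun i j => ∫ t in (0:ℝ)..T, S t i j)
        - a • (1 : Matrix (Fin n) (Fin n) ℝ)).PosSemidef ∧
    (b • (1 : Matrix (Fin n) (Fin n) ℝ)
        - Matrix.of fun i j => ∫ t in (0:ℝ)..T, S t i j).PosSemidef ∧
    (∑ i, ω 0 i ^ 2 = 1) ∧
    (∀ t ∈ Set.Ico (0:ℝ) T,
      HasDerivAt ω (-(S t).mulVec (ω t) + (ω t ⬝ᵥ (S t).mulVec (ω t)) • ω t) t) ∧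
    J = ∫ t in (0:ℝ)..T, ω t ⬝ᵥ (S t).mulVec (ω t)}

/-! On the `j`-th of `n` equal pieces of `[0, T)` the control `S` is `(a n / T) eⱼeⱼᵀ`, so every
`S t` is diagonal with `e₁` as an eigenvector: the right-hand side `-Sω + (ωᵀSω)ω` vanishes at
`ω = e₁` for a unit eigenvector, so the constant trajectory `e₁` solves the equation, and its cost
is the `(1,1)` entry of `∫₀ᵀ S = a • 1`. Since each piece has length `T / n`, that integral is
indeed `a • 1`. As `S` need not be measurable nor positive semi-definite at `t = T`, membership
of `a` in the cost set is witnessed by `pieceControl`, which agrees with `S` on `[0, T)`. Costs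
are nonnegative because the controls are positive semi-definite, so `a` bounds the infimum. -/

def piece (T : ℝ) (n j : ℕ) : Set ℝ := Set.Ico (j * T / n) ((j + 1) * T / n)

section Pieces

variable {T : ℝ} {n : ℕ}

lemma mem_piece_iff_floor_eq (hT : 0 < T) (hn : 0 < n) {t : ℝ} (ht : 0 ≤ t) (j : ℕ) :
    t ∈ piece T n j ↔ ⌊t * n / T⌋₊ = j := by
  have hn' : (0 : ℝ) < n := Nat.cast_pos.mpr hn
  rw [Nat.floor_eq_iff (by positivity), piece, Set.mem_Ico, div_le_iff₀ hn', le_div_iff₀ hT,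
    lt_div_iff₀ hn', div_lt_iff₀ hT]

lemma nonneg_of_mem_piece (hT : 0 ≤ T) {t : ℝ} {j : ℕ} (ht : t ∈ piece T n j) : 0 ≤ t :=
  le_trans (by positivity) ht.1

lemma eq_of_mem_piece (hT : 0 < T) (hn : 0 < n) {t : ℝ} {i j : ℕ} (hi : t ∈ piece T n i)
    (hj : t ∈ piece T n j) : i = j := by
  have ht := nonneg_of_mem_piece hT.le hi
  rw [mem_piece_iff_floor_eq hT hn ht] at hi hj
  rw [← hi, hj]

lemma exists_mem_piece (hT : 0 < T) (hn : 0 < n) {t : ℝ} (ht : t ∈ Set.Ico 0 T) :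
    ∃ j : Fin n, t ∈ piece T n j := by
  have hn' : (0 : ℝ) < n := Nat.cast_pos.mpr hn
  have hlt : ⌊t * n / T⌋₊ < n := by
    rw [Nat.floor_lt (by have := ht.1; positivity), div_lt_iff₀ hT, mul_comm (n : ℝ)]
    exact mul_lt_mul_of_pos_right ht.2 hn'
  exact ⟨⟨_, hlt⟩, (mem_piece_iff_floor_eq hT hn ht.1 _).mpr rfl⟩

lemma piece_subset_Icc (hT : 0 ≤ T) {j : ℕ} (hj : j < n) : piece T n j ⊆ Set.Icc 0 T := by
  have hj' : (j : ℝ) + 1 ≤ n := by exact_mod_cast hj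
  have hn' : (0 : ℝ) < n := by linarith [(j.cast_nonneg : (0 : ℝ) ≤ j)]
  refine fun t ht => ⟨nonneg_of_mem_piece hT ht, ht.2.le.trans ?_⟩
  rw [div_le_iff₀ hn', mul_comm]
  exact mul_le_mul_of_nonneg_left hj' hT

lemma measurableSet_piece (j : ℕ) : MeasurableSet (piece T n j) := measurableSet_Ico

lemma volume_real_piece (hT : 0 ≤ T) (j : ℕ) : volume.real (piece T n j) = T / n := by
  rw [piece, Real.volume_real_Ico_of_le (by gcongr; linarith)]
  ring

end Pieces

lemma intervalIntegral_indicator_const_of_subset_Icc {a b c : ℝ} {s : Set ℝ}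
    (hab : a ≤ b) (hs : MeasurableSet s) (hsub : s ⊆ Set.Icc a b) :
    ∫ t in a..b, s.indicator (fun _ => c) t = volume.real s * c := by
  rw [intervalIntegral.integral_of_le hab, ← integral_Icc_eq_integral_Ioc,
    integral_indicator_const _ hs, measureReal_restrict_apply hs, Set.inter_eq_left.mpr hsub,
    smul_eq_mul]

lemma intervalIntegral_congr_Ico {a b : ℝ} {f g : ℝ → ℝ} (hab : a ≤ b)
    (h : Set.EqOn f g (Set.Ico a b)) : ∫ t in a..b, f t = ∫ t in a..b, g t := by
  rw [intervalIntegral.integral_of_le hab, intervalIntegral.integral_of_le hab,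
    ← integral_Ico_eq_integral_Ioc, ← integral_Ico_eq_integral_Ioc,
    setIntegral_congr_fun measurableSet_Ico h]

noncomputable def pieceControl (a T : ℝ) (n : ℕ) (t : ℝ) : Matrix (Fin n) (Fin n) ℝ :=
  diagonal fun j => (piece T n j).indicator (fun _ => a * n / T) t

section PieceControl

variable {a T : ℝ} {n : ℕ}

lemma pieceControl_eq_of_mem_piece (hT : 0 < T) (hn : 0 < n) {t : ℝ} {j : Fin n}
    (ht : t ∈ piece T n j) : pieceControl a T n t = (a * n / T) • single j j 1 := by
  have hpieces : (fun k : Fin n => (piece T n k).indicator (fun _ => a * n / T) t)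
      = Pi.single j (a * n / T) := by
    funext k
    by_cases hk : k = j
    · subst hk
      simp [Set.indicator_of_mem ht]
    · rw [Pi.single_eq_of_ne hk, Set.indicator_of_notMem]
      exact fun hk' => hk (Fin.ext (eq_of_mem_piece hT hn hk' ht))
  rw [pieceControl, hpieces, diagonal_single, smul_single, smul_eq_mul, mul_one]

lemma measurable_pieceControl_apply (i k : Fin n) :
    Measurable fun t => pieceControl a T n t i k := by
  by_cases hik : i = k
  · subst hik
    simp only [pieceControl, diagonal_apply_eq]
    exact measurable_const.indicator (measurableSet_piece _)
  · simp [pieceControl, hik]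

lemma posSemidef_pieceControl (ha : 0 ≤ a) (hT : 0 ≤ T) (t : ℝ) :
    (pieceControl a T n t).PosSemidef :=
  PosSemidef.diagonal fun _ => Set.indicator_nonneg (fun _ _ => by positivity) _

lemma integral_pieceControl (hT : 0 < T) (hn : 0 < n) :
    (of fun i k => ∫ t in (0:ℝ)..T, pieceControl a T n t i k) = a • 1 := by
  ext i k
  by_cases hik : i = k
  · subst hik
    have hn' : (0 : ℝ) < n := Nat.cast_pos.mpr hn
    simp only [pieceControl, of_apply, diagonal_apply_eq, Matrix.smul_apply, one_apply_eq,
      smul_eq_mul, mul_one]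
    rw [intervalIntegral_indicator_const_of_subset_Icc hT.le (measurableSet_piece _)
      (piece_subset_Icc hT.le i.isLt), volume_real_piece hT.le]
    field_simp
  · simp [pieceControl, hik]

lemma pieceControl_rhs_single_eq_zero (t : ℝ) (i : Fin n) :
    -(pieceControl a T n t *ᵥ Pi.single i 1)
      + (Pi.single i 1 ⬝ᵥ pieceControl a T n t *ᵥ Pi.single i 1) • Pi.single i 1 = 0 := by
  rw [pieceControl, diagonal_mulVec_single, mul_one, single_one_dotProduct, Pi.single_eq_same,
    ← Pi.single_smul', smul_eq_mul, mul_one, neg_add_cancel]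

end PieceControl

lemma single_one_dotProduct_mulVec_single_one {m : Type*} [Fintype m] [DecidableEq m]
    (M : Matrix m m ℝ) (i : m) : Pi.single i 1 ⬝ᵥ M *ᵥ Pi.single i 1 = M i i := by
  rw [single_one_dotProduct, mulVec_single_one, col_apply]

lemma integral_apply_self_of_integral_eq_smul_one {m : Type*} [DecidableEq m]
    {S : ℝ → Matrix m m ℝ} {T c : ℝ} (h : (of fun i k => ∫ t in (0:ℝ)..T, S t i k) = c • 1)
    (i : m) : ∫ t in (0:ℝ)..T, S t i i = c := by
  simpa using congrFun (congrFun h i) i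

lemma zero_mem_lowerBounds_costSet (a b : ℝ) {T : ℝ} (hT : 0 ≤ T) (n : ℕ) :
    0 ∈ lowerBounds (costSet a b T n) := by
  rintro J ⟨S, ω, -, hpsd, -, -, -, -, rfl⟩
  exact intervalIntegral.integral_nonneg hT fun t ht => (hpsd t ht).dotProduct_mulVec_nonneg _

lemma self_mem_costSet {a b T : ℝ} {n : ℕ} (hn : 0 < n) (ha : 0 ≤ a) (hab : a ≤ b)
    (hT : 0 < T) : a ∈ costSet a b T n := by
  set i₀ : Fin n := ⟨0, hn⟩
  have hint := integral_pieceControl (a := a) hT hn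
  refine ⟨pieceControl a T n, fun _ => Pi.single i₀ 1, measurable_pieceControl_apply,
    fun t _ => posSemidef_pieceControl ha hT.le t, ?_, ?_, ?_, fun t _ => ?_, ?_⟩
  · rw [hint, sub_self]
    exact PosSemidef.zero
  · rw [hint, ← sub_smul, smul_one_eq_diagonal]
    exact PosSemidef.diagonal fun _ => sub_nonneg.mpr hab
  · simp [Pi.single_apply]
  · rw [pieceControl_rhs_single_eq_zero]
    exact hasDerivAt_const t _
  · simp_rw [single_one_dotProduct_mulVec_single_one]
    exact (integral_apply_self_of_integral_eq_smul_one hint i₀).symm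

/-- The piecewise constant control `S(t) = (a n / T)·eⱼeⱼᵀ` on `[(j-1)T/n, jT/n)`
satisfies `∫₀ᵀ S = a•1`; the trajectory of `ω' = -Sω + (ωᵀSω)ω` starting at `e₁` is
constant, with cost `J(S,e₁) = a`. In particular `μ(a,b,T,n) ≤ a`. -/
theorem mu_le_a (n : ℕ) (hn : 1 ≤ n) (a b T : ℝ) (ha : 0 < a) (hab : a ≤ b)
    (hT : 0 < T)
    (S : ℝ → Matrix (Fin n) (Fin n) ℝ)
    (hS : ∀ (j : Fin n), ∀ t ∈ Set.Ico ((j : ℝ) * T / n) (((j : ℝ) + 1) * T / n),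
      S t = (a * n / T) • Matrix.single j j 1)
    (e₁ : Fin n → ℝ) (he₁ : e₁ = fun i : Fin n => if (i : ℕ) = 0 then (1:ℝ) else 0) :
    (Matrix.of fun i j => ∫ t in (0:ℝ)..T, S t i j)
        = a • (1 : Matrix (Fin n) (Fin n) ℝ) ∧
    (∀ t ∈ Set.Ico (0:ℝ) T,
      HasDerivAt (fun _ : ℝ => e₁)
        (-(S t).mulVec e₁ + (e₁ ⬝ᵥ (S t).mulVec e₁) • e₁) t) ∧
    (∫ t in (0:ℝ)..T, e₁ ⬝ᵥ (S t).mulVec e₁) = a ∧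
    sInf (costSet a b T n) ≤ a := by
  have he₁ : e₁ = Pi.single ⟨0, hn⟩ 1 := by
    subst he₁
    funext i
    simp [Pi.single_apply, Fin.ext_iff]
  have hS : Set.EqOn S (pieceControl a T n) (Set.Ico 0 T) := fun t ht => by
    obtain ⟨j, hj⟩ := exists_mem_piece hT hn ht
    rw [hS j t hj, pieceControl_eq_of_mem_piece hT hn hj]
  have hint : (of fun i k => ∫ t in (0:ℝ)..T, S t i k) = a • 1 := by
    rw [← integral_pieceControl hT hn]
    ext i k
    exact intervalIntegral_congr_Ico hT.le fun t ht => by rw [hS ht]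
  refine ⟨hint, fun t ht => ?_, ?_, ?_⟩
  · rw [hS ht, he₁, pieceControl_rhs_single_eq_zero]
    exact hasDerivAt_const t _
  · simp_rw [he₁, single_one_dotProduct_mulVec_single_one]
    exact integral_apply_self_of_integral_eq_smul_one hint _
  · exact csInf_le ⟨0, zero_mem_lowerBounds_costSet a b hT.le n⟩
      (self_mem_costSet hn ha.le hab hT)
end

section
/- Characteristic polynomial identity: let P = diag(-d₁,…,-dₙ) with the dᵢ pairwise distinct, and let ω, p ∈ ℝⁿ. Set M = P - (ωωᵀ + pωᵀ + ωpᵀ). Then the ratio of characteristic polynomials satisfies det(ξI - M)/det(ξI - P) = 1 + Σᵢ (ωᵢ² + 2ωᵢpᵢ + Σ_{j≠i} (ωᵢpⱼ - ωⱼpᵢ)²/(dᵢ - dⱼ)) · 1/(ξ + dᵢ), for every ξ not in {-d₁,…,-dₙ}. -/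
/-!
Writing `ξ - M = D + ω (ω + p)ᵀ + p ωᵀ` with `D = ξ - P = diag (ξ + dᵢ)`, the matrix determinant
lemma `det (D + V W) = det D · det (1 + W D⁻¹ V)` reduces the ratio to a `2 × 2` determinant whose
entries are the weighted inner products `A = Σ ωᵢ²/sᵢ`, `B = Σ ωᵢpᵢ/sᵢ`, `C = Σ pᵢ²/sᵢ`
(`sᵢ = ξ + dᵢ`). It equals `1 + A + 2B + (B² - AC)`, and by Lagrange's identity
`B² - AC = -½ Σᵢⱼ (ωᵢpⱼ - ωⱼpᵢ)² / (sᵢsⱼ)`; the partial fraction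
`1/(sᵢsⱼ) = (1/sⱼ - 1/sᵢ)/(dᵢ - dⱼ)` and the symmetry in `i, j` turn this into the stated sum.
-/

open Matrix Finset

namespace Matrix

variable {m : Type*} [Fintype m] [DecidableEq m]

theorem det_add_vecMulVec_add_vecMulVec {R : Type*} [CommRing R] {A : Matrix m m R}
    (hA : IsUnit A.det) (a b c e : m → R) :
    (A + vecMulVec a b + vecMulVec c e).det =
      A.det * ((1 + b ⬝ᵥ A⁻¹ *ᵥ a) * (1 + e ⬝ᵥ A⁻¹ *ᵥ c) -
        (b ⬝ᵥ A⁻¹ *ᵥ c) * (e ⬝ᵥ A⁻¹ *ᵥ a)) := by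
  have hUV : vecMulVec a b + vecMulVec c e = (of ![a, c])ᵀ * of ![b, e] := by
    ext i j
    simp [mul_apply, Fin.sum_univ_two, vecMulVec_apply]
  have hG : of ![b, e] * A⁻¹ * (of ![a, c])ᵀ =
      of fun k l => ![b, e] k ⬝ᵥ A⁻¹ *ᵥ ![a, c] l := by
    ext k l
    rw [of_apply, dotProduct_mulVec]
    fin_cases k <;> fin_cases l <;> simp [mul_apply, vecMul, dotProduct]
  rw [add_assoc, hUV, det_add_mul _ _ hA, hG, det_fin_two]
  simp

theorem dotProduct_inv_diagonal_mulVec {K : Type*} [Field K] {s : m → K} (hs : ∀ i, s i ≠ 0)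
    (u v : m → K) : u ⬝ᵥ (diagonal s)⁻¹ *ᵥ v = ∑ i, (s i)⁻¹ * u i * v i := by
  have hinv : (diagonal s)⁻¹ = diagonal s⁻¹ :=
    inv_eq_left_inv (by simp [diagonal_mul_diagonal, inv_mul_cancel₀ (hs _)])
  simp [hinv, mulVec_diagonal, dotProduct, mul_left_comm, mul_assoc]

end Matrix

namespace Finset

theorem two_mul_sum_mul_sum_sub_sq {ι R : Type*} [CommRing R] (s : Finset ι) (w a b : ι → R) :
    2 * ((∑ i ∈ s, w i * a i * a i) * (∑ i ∈ s, w i * b i * b i) -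
        (∑ i ∈ s, w i * a i * b i) ^ 2) =
      ∑ i ∈ s, ∑ j ∈ s, w i * w j * (a i * b j - a j * b i) ^ 2 := by
  have expand : ∀ i j, w i * w j * (a i * b j - a j * b i) ^ 2 =
      w i * a i * a i * (w j * b j * b j) + w j * a j * a j * (w i * b i * b i) -
        2 * (w i * a i * b i * (w j * a j * b j)) := fun i j => by ring
  simp only [expand, sum_sub_distrib, sum_add_distrib, ← mul_sum, ← sum_mul]
  ring

variable {ι K : Type*} [Fintype ι] [DecidableEq ι] [Field K]

theorem sum_sum_inv_mul_inv_mul_eq {s : ι → K} (hs : ∀ i, s i ≠ 0)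
    (hinj : Function.Injective s) {c : ι → ι → K} (hc : ∀ i j, c i j = c j i)
    (hc0 : ∀ i, c i i = 0) :
    ∑ i, ∑ j, (s i)⁻¹ * (s j)⁻¹ * c i j =
      -2 * ∑ i, (∑ j ∈ univ.erase i, c i j / (s i - s j)) * (s i)⁻¹ := by
  calc ∑ i, ∑ j, (s i)⁻¹ * (s j)⁻¹ * c i j
      = ∑ i, ∑ j ∈ univ.erase i,
          (c i j / (s i - s j) * (s j)⁻¹ - c i j / (s i - s j) * (s i)⁻¹) := by
        refine sum_congr rfl fun i _ => ?_
        rw [← sum_erase univ (a := i) (by simp [hc0])]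
        refine sum_congr rfl fun j hj => ?_
        have hij : s i - s j ≠ 0 := sub_ne_zero.mpr fun h => ne_of_mem_erase hj (hinj h).symm
        field_simp [hs i, hs j]
    _ = _ := by
        simp only [sum_sub_distrib]
        rw [sum_comm' (t' := univ) (s' := fun j => univ.erase j) (by simp [ne_comm])]
        have hswap : ∑ j, ∑ i ∈ univ.erase j, c i j / (s i - s j) * (s j)⁻¹ =
            -∑ j, ∑ i ∈ univ.erase j, c j i / (s j - s i) * (s j)⁻¹ := by
          simp only [← sum_neg_distrib, ← neg_mul, ← div_neg, neg_sub, hc]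
        rw [hswap]
        simp only [sum_mul]
        ring

end Finset

theorem det_diagonal_add_vecMulVec_div_det_diagonal {ι K : Type*} [Fintype ι] [DecidableEq ι]
    [Field K] [NeZero (2 : K)] {s : ι → K} (hs : ∀ i, s i ≠ 0) (hinj : Function.Injective s)
    (ω p : ι → K) :
    (diagonal s + (vecMulVec ω ω + vecMulVec p ω + vecMulVec ω p)).det / (diagonal s).det =
      1 + ∑ i, (ω i ^ 2 + 2 * ω i * p i
          + ∑ j ∈ univ.erase i, (ω i * p j - ω j * p i) ^ 2 / (s i - s j)) * (s i)⁻¹ := by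
  have hD : (diagonal s).det ≠ 0 := by simp [det_diagonal, prod_ne_zero_iff, hs]
  have hrank : vecMulVec ω ω + vecMulVec p ω + vecMulVec ω p =
      vecMulVec ω (ω + p) + vecMulVec p ω := by
    rw [vecMulVec_add]
    abel
  rw [hrank, ← add_assoc, det_add_vecMulVec_add_vecMulVec (isUnit_iff_ne_zero.mpr hD),
    mul_div_cancel_left₀ _ hD]
  simp only [add_dotProduct]
  simp only [dotProduct_inv_diagonal_mulVec hs]
  have hlagrange := two_mul_sum_mul_sum_sub_sq univ (fun i => (s i)⁻¹) ω p
  have hpartial := sum_sum_inv_mul_inv_mul_eq hs hinj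
    (c := fun i j => (ω i * p j - ω j * p i) ^ 2) (fun _ _ => by ring) (fun _ => by ring)
  have hsymm : ∑ i, (s i)⁻¹ * p i * ω i = ∑ i, (s i)⁻¹ * ω i * p i :=
    sum_congr rfl fun i _ => mul_right_comm _ _ _
  have hsummand : ∀ i, (ω i ^ 2 + 2 * ω i * p i
      + ∑ j ∈ univ.erase i, (ω i * p j - ω j * p i) ^ 2 / (s i - s j)) * (s i)⁻¹ =
      (s i)⁻¹ * ω i * ω i + 2 * ((s i)⁻¹ * ω i * p i)
        + (∑ j ∈ univ.erase i, (ω i * p j - ω j * p i) ^ 2 / (s i - s j)) * (s i)⁻¹ :=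
    fun i => by ring
  simp only [hsummand, sum_add_distrib, ← mul_sum, hsymm]
  refine mul_left_cancel₀ (two_ne_zero : (2 : K) ≠ 0) ?_
  linear_combination -hlagrange - hpartial

/-- Characteristic polynomial identity: for `P = diag (-d₁,…,-dₙ)` with the `dᵢ`
pairwise distinct and `M = P - (ωωᵀ + pωᵀ + ωpᵀ)`, one has, for every `ξ ∉ {-dᵢ}`,
`det (ξ•1 - M) / det (ξ•1 - P)
  = 1 + Σᵢ (ωᵢ² + 2ωᵢpᵢ + Σ_{j≠i} (ωᵢpⱼ - ωⱼpᵢ)²/(dᵢ - dⱼ)) / (ξ + dᵢ)`. -/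
theorem char_poly_ratio_identity (n : ℕ) (d : Fin n → ℝ) (hd : Function.Injective d)
    (ω p : Fin n → ℝ) (P M : Matrix (Fin n) (Fin n) ℝ)
    (hP : P = Matrix.diagonal (fun i => -d i))
    (hM : M = P - (Matrix.vecMulVec ω ω + Matrix.vecMulVec p ω + Matrix.vecMulVec ω p))
    (ξ : ℝ) (hξ : ∀ i, ξ ≠ -d i) :
    (ξ • (1 : Matrix (Fin n) (Fin n) ℝ) - M).det
        / (ξ • (1 : Matrix (Fin n) (Fin n) ℝ) - P).det
      = 1 + ∑ i, (ω i ^ 2 + 2 * ω i * p i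
          + ∑ j ∈ Finset.univ.erase i, (ω i * p j - ω j * p i) ^ 2 / (d i - d j))
          * (1 / (ξ + d i)) := by
  have hs : ∀ i, ξ + d i ≠ 0 := fun i h => hξ i (eq_neg_of_add_eq_zero_left h)
  have hPD : ξ • 1 - P = diagonal fun i => ξ + d i := by
    rw [hP, smul_one_eq_diagonal, diagonal_sub]
    simp
  have hMD : ξ • 1 - M =
      (diagonal fun i => ξ + d i) + (vecMulVec ω ω + vecMulVec p ω + vecMulVec ω p) := by
    rw [hM, ← hPD]
    abel
  rw [hMD, hPD, det_diagonal_add_vecMulVec_div_det_diagonal hs ((add_right_injective ξ).comp hd)]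
  simp only [add_sub_add_left_eq_sub, one_div]
end

section
/- Let H : T*𝕊ⁿ⁻¹ → ℝ be smooth, where T*𝕊ⁿ⁻¹ is identified with {(ω,p) ∈ ℝⁿ×ℝⁿ : ‖ω‖=1, pᵀω=0}. Then the tangent space at (ω,p) is {(v₁,v₂) : ωᵀv₁ = 0, pᵀv₁ + ωᵀv₂ = 0}, and the Hamiltonian vector field of H is given by ω' = ∂H/∂p - (ωᵀ ∂H/∂p)ω and p' = ∂H/∂ω - (ωᵀ ∂H/∂ω)ω - (ωᵀ ∂H/∂p)p + (pᵀ ∂H/∂p)ω. -/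
/-!
Every tangent vector of the level set `{ωᵀω = 1, pᵀω = 0}` is annihilated by the derivatives
of the two constraints. Conversely, a direction `(v₁, v₂)` solving the linearised constraints is
the velocity at `0` of the curve `t ↦ (w t, q t - (q tᵀ w t) w t)` in the level set, where
`w t` is the normalisation of `ω + t v₁` and `q t = p + t v₂`.

For the vector field, testing the defining identity against the tangent vectors `(0, v)` and
`(v, -(pᵀv) ω)` with `ωᵀv = 0` shows that `∂H/∂p - vHp` and `∂H/∂ω - (ωᵀ∂H/∂p) p - vHω` are
orthogonal to `ω^⊥`, hence multiples of `ω`; the coefficients come from `ωᵀvHp = 0` and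
`pᵀvHp = ωᵀvHω`.
-/

open Matrix Filter Topology

namespace Matrix

variable (𝕜 : Type*) {ι : Type*} [NontriviallyNormedField 𝕜] [Fintype ι]

noncomputable def dotProductCLM : (ι → 𝕜) →L[𝕜] (ι → 𝕜) →L[𝕜] 𝕜 :=
  ∑ i, (ContinuousLinearMap.mul 𝕜 𝕜).bilinearComp (.proj i) (.proj i)

@[simp]
theorem dotProductCLM_apply (v w : ι → 𝕜) : dotProductCLM 𝕜 v w = v ⬝ᵥ w := by
  simp [dotProductCLM, dotProduct]

end Matrix

theorem Matrix.eq_dotProduct_smul_of_orthogonal {R ι : Type*} [CommRing R] [LinearOrder R]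
    [IsStrictOrderedRing R] [Fintype ι] {u ω : ι → R} (hω : ω ⬝ᵥ ω = 1)
    (h : ∀ v, ω ⬝ᵥ v = 0 → u ⬝ᵥ v = 0) : u = (ω ⬝ᵥ u) • ω := by
  set w := u - (ω ⬝ᵥ u) • ω
  have hωw : ω ⬝ᵥ w = 0 := by simp [w, dotProduct_sub, hω]
  have hww : w ⬝ᵥ w = 0 :=
    calc w ⬝ᵥ w = (u - (ω ⬝ᵥ u) • ω) ⬝ᵥ w := rfl
      _ = u ⬝ᵥ w - (ω ⬝ᵥ u) * (ω ⬝ᵥ w) := by rw [sub_dotProduct, smul_dotProduct, smul_eq_mul]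
      _ = 0 := by rw [h w hωw, hωw, mul_zero, sub_zero]
  exact sub_eq_zero.1 (dotProduct_self_eq_zero.1 hww)

section Deriv

variable {𝕜 ι E : Type*} [NontriviallyNormedField 𝕜] [Fintype ι]
  [NormedAddCommGroup E] [NormedSpace 𝕜 E]

theorem HasFDerivAt.dotProduct {f g : E → ι → 𝕜} {f' g' : E →L[𝕜] ι → 𝕜} {x : E}
    (hf : HasFDerivAt f f' x) (hg : HasFDerivAt g g' x) :
    HasFDerivAt (fun y => f y ⬝ᵥ g y)
      ((dotProductCLM 𝕜).precompR E (f x) g' + (dotProductCLM 𝕜).precompL E f' (g x)) x := by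
  simpa using (dotProductCLM 𝕜).hasFDerivAt_of_bilinear hf hg

theorem HasDerivAt.dotProduct {f g : 𝕜 → ι → 𝕜} {f' g' : ι → 𝕜} {t : 𝕜}
    (hf : HasDerivAt f f' t) (hg : HasDerivAt g g' t) :
    HasDerivAt (fun s => f s ⬝ᵥ g s) (f t ⬝ᵥ g' + f' ⬝ᵥ g t) t := by
  simpa using (dotProductCLM 𝕜).hasDerivAt_of_bilinear (fun _ => hf) (fun _ => hg)

theorem HasFDerivWithinAt.tangentConeAt_subset_ker {F : Type*} [NormedAddCommGroup F]
    [NormedSpace 𝕜 F] {f : E → F} {f' : E →L[𝕜] F} {s : Set E} {x : E}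
    (hf : HasFDerivWithinAt f f' s x) (hs : ∀ y ∈ s, f y = f x) :
    tangentConeAt 𝕜 s x ⊆ (LinearMap.ker (f' : E →ₗ[𝕜] F) : Set E) :=
  hf.unique_on ((hasFDerivWithinAt_const (f x) x s).congr hs rfl)

theorem HasDerivAt.mem_tangentConeAt {γ : 𝕜 → E} {v : E} {t : 𝕜} {s : Set E}
    (hγ : HasDerivAt γ v t) (hγs : ∀ᶠ u in 𝓝[≠] t, γ u ∈ s) :
    v ∈ tangentConeAt 𝕜 s (γ t) := by
  refine mem_tangentConeAt_of_seq (𝓝[≠] t) (fun u => (u - t)⁻¹) (fun u => γ u - γ t) ?_ ?_ ?_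
  · simpa using (hγ.continuousAt.sub_const (γ t)).mono_left nhdsWithin_le_nhds
  · simpa using hγs
  · exact hγ.tendsto_slope.congr fun u => slope_def_module γ t u

end Deriv

theorem exists_unit_curve_hasDerivAt {ι : Type*} [Fintype ι] {ω v : ι → ℝ}
    (hω : ω ⬝ᵥ ω = 1) (hv : ω ⬝ᵥ v = 0) :
    ∃ w : ℝ → ι → ℝ, w 0 = ω ∧ HasDerivAt w v 0 ∧ ∀ t, w t ⬝ᵥ w t = 1 := by
  set a := v ⬝ᵥ v
  have hpos (t : ℝ) : 0 < 1 + a * t ^ 2 := by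
    have : 0 ≤ a := Finset.sum_nonneg fun i _ => mul_self_nonneg (v i)
    positivity
  have hnorm (t : ℝ) : (ω + t • v) ⬝ᵥ (ω + t • v) = 1 + a * t ^ 2 := by
    simp only [add_dotProduct, dotProduct_add, smul_dotProduct, dotProduct_smul, smul_eq_mul,
      hω, hv, dotProduct_comm v ω]
    ring
  have hσ : HasDerivAt (fun t : ℝ => √(1 + a * t ^ 2)) 0 0 := by
    simpa using (((hasDerivAt_pow 2 (0 : ℝ)).const_mul a).const_add 1).sqrt (by simp)
  have hline : HasDerivAt (fun t : ℝ => ω + t • v) v 0 := by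
    simpa using ((hasDerivAt_id (0 : ℝ)).smul_const v).const_add ω
  refine ⟨fun t => (√(1 + a * t ^ 2))⁻¹ • (ω + t • v), by simp, ?_, fun t => ?_⟩
  · exact ((hσ.fun_inv (by simp)).fun_smul hline).congr_deriv (by simp)
  · simp only [smul_dotProduct, dotProduct_smul, smul_eq_mul, hnorm]
    field_simp
    rw [Real.sq_sqrt (hpos t).le, div_self (hpos t).ne']

section CotangentSphere

variable {ι : Type*} [Fintype ι]

def cotangentSphere (ι : Type*) [Fintype ι] : Set ((ι → ℝ) × (ι → ℝ)) :=
  {z | (∑ i, z.1 i ^ 2 = 1) ∧ z.2 ⬝ᵥ z.1 = 0}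

theorem mem_cotangentSphere {z : (ι → ℝ) × (ι → ℝ)} :
    z ∈ cotangentSphere ι ↔ z.1 ⬝ᵥ z.1 = 1 ∧ z.2 ⬝ᵥ z.1 = 0 := by
  simp [cotangentSphere, dotProduct, sq]

theorem tangentConeAt_cotangentSphere_subset {ω p : ι → ℝ} (hx : (ω, p) ∈ cotangentSphere ι) :
    tangentConeAt ℝ (cotangentSphere ι) (ω, p) ⊆
      {v | ω ⬝ᵥ v.1 = 0 ∧ p ⬝ᵥ v.1 + ω ⬝ᵥ v.2 = 0} := by
  rintro ⟨v₁, v₂⟩ hv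
  have hsphere := (hasFDerivAt_fst.dotProduct hasFDerivAt_fst).hasFDerivWithinAt
    |>.tangentConeAt_subset_ker (s := cotangentSphere ι) (fun z hz => by
      simp only [(mem_cotangentSphere.1 hz).1, (mem_cotangentSphere.1 hx).1]) hv
  have hfiber := (hasFDerivAt_snd.dotProduct hasFDerivAt_fst).hasFDerivWithinAt
    |>.tangentConeAt_subset_ker (s := cotangentSphere ι) (fun z hz => by
      simp only [(mem_cotangentSphere.1 hz).2, (mem_cotangentSphere.1 hx).2]) hv
  simp [dotProduct_comm v₁ ω, dotProduct_comm v₂ ω] at hsphere hfiber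
  exact ⟨hsphere, hfiber⟩

theorem subset_tangentConeAt_cotangentSphere {ω p : ι → ℝ} (hx : (ω, p) ∈ cotangentSphere ι) :
    {v | ω ⬝ᵥ v.1 = 0 ∧ p ⬝ᵥ v.1 + ω ⬝ᵥ v.2 = 0} ⊆
      tangentConeAt ℝ (cotangentSphere ι) (ω, p) := by
  rintro ⟨v₁, v₂⟩ ⟨hv₁ : ω ⬝ᵥ v₁ = 0, hv₂ : p ⬝ᵥ v₁ + ω ⬝ᵥ v₂ = 0⟩
  obtain ⟨hωω, hpω⟩ : ω ⬝ᵥ ω = 1 ∧ p ⬝ᵥ ω = 0 := mem_cotangentSphere.1 hx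
  obtain ⟨w, hw₀, hw, hww⟩ := exists_unit_curve_hasDerivAt hωω hv₁
  obtain ⟨q, hq₀, hq⟩ : ∃ q : ℝ → ι → ℝ, q 0 = p ∧ HasDerivAt q v₂ 0 :=
    ⟨fun t => p + t • v₂, by simp, by
      simpa using ((hasDerivAt_id (0 : ℝ)).smul_const v₂).const_add p⟩
  have hγ : HasDerivAt (fun t => (w t, q t - (q t ⬝ᵥ w t) • w t)) (v₁, v₂) 0 := by
    refine hw.prodMk ((hq.sub ((hq.dotProduct hw).smul hw)).congr_deriv ?_)
    simp [hw₀, hq₀, hpω, dotProduct_comm v₂ ω, hv₂]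
  have hγS : ∀ t, (w t, q t - (q t ⬝ᵥ w t) • w t) ∈ cotangentSphere ι := fun t =>
    mem_cotangentSphere.2 ⟨hww t, by simp [sub_dotProduct, hww t]⟩
  simpa [hw₀, hq₀, hpω] using hγ.mem_tangentConeAt (Eventually.of_forall hγS)

theorem tangentConeAt_cotangentSphere {ω p : ι → ℝ} (hx : (ω, p) ∈ cotangentSphere ι) :
    tangentConeAt ℝ (cotangentSphere ι) (ω, p) =
      {v | ω ⬝ᵥ v.1 = 0 ∧ p ⬝ᵥ v.1 + ω ⬝ᵥ v.2 = 0} :=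
  (tangentConeAt_cotangentSphere_subset hx).antisymm (subset_tangentConeAt_cotangentSphere hx)

end CotangentSphere

/-- Hamiltonian vector field on `T*𝕊ⁿ⁻¹ = {(ω,p) : ‖ω‖ = 1, pᵀω = 0} ⊆ ℝⁿ × ℝⁿ`.
The tangent space (tangent cone) at `(ω,p)` is `{(v₁,v₂) : ωᵀv₁ = 0, pᵀv₁ + ωᵀv₂ = 0}`,
and if `(vHp, -vHω)` is the Hamiltonian vector field of a Hamiltonian with partial
gradients `(Hω, Hp)` — i.e. `ωᵀvHp = 0`, `pᵀvHp = ωᵀvHω`, and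
`v₁ᵀHω + v₂ᵀHp = v₁ᵀvHω + v₂ᵀvHp` for every tangent vector `(v₁,v₂)` — then
`vHp = ∂H/∂p - (ωᵀ∂H/∂p)ω` and
`vHω = ∂H/∂ω - (ωᵀ∂H/∂ω)ω - (ωᵀ∂H/∂p)p + (pᵀ∂H/∂p)ω`,
so that `ω' = vHp` and `p' = vHω` as in the statement. -/
theorem hamiltonian_vector_field_sphere (n : ℕ)
    (ω p : Fin n → ℝ) (hω : ∑ i, ω i ^ 2 = 1) (hpω : p ⬝ᵥ ω = 0)
    (Hω Hp vHω vHp : Fin n → ℝ)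
    (h1 : ω ⬝ᵥ vHp = 0)
    (h2 : p ⬝ᵥ vHp = ω ⬝ᵥ vHω)
    (h3 : ∀ v₁ v₂ : Fin n → ℝ, ω ⬝ᵥ v₁ = 0 → p ⬝ᵥ v₁ + ω ⬝ᵥ v₂ = 0 →
      v₁ ⬝ᵥ Hω + v₂ ⬝ᵥ Hp = v₁ ⬝ᵥ vHω + v₂ ⬝ᵥ vHp) :
    (tangentConeAt ℝ
        ({z : (Fin n → ℝ) × (Fin n → ℝ) | (∑ i, z.1 i ^ 2 = 1) ∧ z.2 ⬝ᵥ z.1 = 0})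
        (ω, p)
      = {v : (Fin n → ℝ) × (Fin n → ℝ) | ω ⬝ᵥ v.1 = 0 ∧ p ⬝ᵥ v.1 + ω ⬝ᵥ v.2 = 0}) ∧
    vHp = Hp - (ω ⬝ᵥ Hp) • ω ∧
    vHω = Hω - (ω ⬝ᵥ Hω) • ω - (ω ⬝ᵥ Hp) • p + (p ⬝ᵥ Hp) • ω := by
  have hx : (ω, p) ∈ cotangentSphere (Fin n) := ⟨hω, hpω⟩
  have hωω : ω ⬝ᵥ ω = 1 := (mem_cotangentSphere.1 hx).1
  refine ⟨tangentConeAt_cotangentSphere hx, ?_⟩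
  have hp : Hp - vHp = (ω ⬝ᵥ Hp) • ω := by
    have := eq_dotProduct_smul_of_orthogonal hωω (u := Hp - vHp) fun v hv => by
      have := h3 0 v (by simp) (by simpa using hv)
      simpa [dotProduct_comm _ v, sub_eq_zero] using this
    rwa [dotProduct_sub, h1, sub_zero] at this
  have hvHp : vHp = Hp - (ω ⬝ᵥ Hp) • ω := by rw [← hp, sub_sub_cancel]
  refine ⟨hvHp, ?_⟩
  have hω' : Hω - (ω ⬝ᵥ Hp) • p - vHω = (ω ⬝ᵥ Hω - p ⬝ᵥ Hp) • ω := by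
    have := eq_dotProduct_smul_of_orthogonal hωω (u := Hω - (ω ⬝ᵥ Hp) • p - vHω) fun v hv => by
      have := h3 v (-(p ⬝ᵥ v) • ω) hv (by simp [hωω])
      simp [h1, dotProduct_comm _ v] at this ⊢
      linarith
    have hpvHp : p ⬝ᵥ vHp = p ⬝ᵥ Hp := by simp [hvHp, dotProduct_sub, hpω]
    rw [this, dotProduct_sub, dotProduct_sub, dotProduct_smul, dotProduct_comm ω p, hpω, ← h2,
      hpvHp, smul_zero, sub_zero]
  linear_combination (norm := module) -hω'
end

section
/- For γ ∈ (0,π), the ratio K₊(γ)/K₋(γ) = (K(cos(γ/2)) - E(cos(γ/2)))/E(cos(γ/2)) is strictly decreasing in γ, tends to +∞ as γ → 0⁺, and tends to 0 as γ → π⁻. Hence for any ratio ρ > 0 there exists a unique γ ∈ (0,π) with K₊(γ)/K₋(γ) = ρ. -/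
open Real Filter

/-- Complete elliptic integral of the first kind. -/
noncomputable def ellipticK (x : ℝ) : ℝ :=
  ∫ u in (0:ℝ)..(Real.pi/2), 1 / Real.sqrt (1 - x ^ 2 * Real.sin u ^ 2)

/-- Complete elliptic integral of the second kind. -/
noncomputable def ellipticE (x : ℝ) : ℝ :=
  ∫ u in (0:ℝ)..(Real.pi/2), Real.sqrt (1 - x ^ 2 * Real.sin u ^ 2)

/-! With `k = cos (γ/2)` the ratio is `(K k - E k) / E k`. The difference
`K k - E k = ∫ k² sin² u / √(1 - k² sin² u)` has an integrand increasing in `k²`, while `E`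
decreases in `k²` and stays in `[1, π/2]`; so the ratio increases strictly in `k²`, is continuous
on `(-1, 1)`, vanishes at `k = 0`, and blows up as `k → 1⁻` because
`K k ≥ log (1 + π / (2 √(1 - k²)))`. Composing with `γ ↦ cos (γ/2)`, which decreases from `1` to
`0` on `(0, π)`, and applying the intermediate value theorem gives the result. -/

open Set Topology intervalIntegral

lemma one_sub_sq_mul_sin_sq_pos {x : ℝ} (hx : x ^ 2 < 1) (u : ℝ) : 0 < 1 - x ^ 2 * sin u ^ 2 := by
  nlinarith [sin_sq_le_one u, sq_nonneg x, sq_nonneg (sin u)]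

lemma strictMonoOn_div_sqrt_one_sub : StrictMonoOn (fun t : ℝ => t / √(1 - t)) (Ico 0 1) := by
  rintro s ⟨hs0, -⟩ t ⟨-, ht1⟩ hst
  have hsqrt : √(1 - t) < √(1 - s) := sqrt_lt_sqrt (by linarith) (by linarith)
  have hpos : 0 < √(1 - t) := sqrt_pos.2 (by linarith)
  calc s / √(1 - s) ≤ s / √(1 - t) := div_le_div_of_nonneg_left hs0 hpos hsqrt.le
    _ < t / √(1 - t) := div_lt_div_of_pos_right hst hpos

lemma continuous_ellipticE : Continuous ellipticE :=
  continuous_parametric_intervalIntegral_of_continuous' (by fun_prop) _ _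

lemma continuousOn_ellipticK : ContinuousOn ellipticK (Ioo (-1) 1) := by
  rw [continuousOn_iff_continuous_domRestrict]
  refine continuous_parametric_intervalIntegral_of_continuous'
    (f := fun (x : Ioo (-1 : ℝ) 1) u => 1 / √(1 - (x : ℝ) ^ 2 * sin u ^ 2)) ?_ _ _
  refine continuous_const.div (by fun_prop) fun ⟨⟨x, hx⟩, u⟩ => ?_
  have : x ^ 2 < 1 := by nlinarith [hx.1, hx.2]
  exact (sqrt_pos.2 (one_sub_sq_mul_sin_sq_pos this u)).ne'

lemma intervalIntegrable_sqrt_one_sub_sq_mul_sin_sq (x : ℝ) :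
    IntervalIntegrable (fun u => √(1 - x ^ 2 * sin u ^ 2)) MeasureTheory.volume 0 (π / 2) :=
  (by fun_prop : Continuous _).intervalIntegrable _ _

lemma one_le_ellipticE {x : ℝ} (hx : x ^ 2 ≤ 1) : 1 ≤ ellipticE x := by
  have hcos : ∀ u ∈ Icc 0 (π / 2), cos u ≤ √(1 - x ^ 2 * sin u ^ 2) := fun u hu => by
    refine le_sqrt_of_sq_le ?_
    nlinarith [sin_sq_add_cos_sq u, sq_nonneg (sin u)]
  have := integral_mono_on (by positivity) (continuous_cos.intervalIntegrable _ _)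
    (intervalIntegrable_sqrt_one_sub_sq_mul_sin_sq x) hcos
  rwa [integral_cos, sin_pi_div_two, sin_zero, sub_zero] at this

lemma ellipticE_pos {x : ℝ} (hx : x ^ 2 ≤ 1) : 0 < ellipticE x :=
  one_pos.trans_le (one_le_ellipticE hx)

lemma ellipticE_le_pi_div_two (x : ℝ) : ellipticE x ≤ π / 2 := by
  have hle : ∀ u ∈ Icc 0 (π / 2), √(1 - x ^ 2 * sin u ^ 2) ≤ 1 := fun u _ =>
    sqrt_le_one.2 (by nlinarith [sq_nonneg x, sq_nonneg (sin u)])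
  simpa [ellipticE] using integral_mono_on (by positivity)
    (intervalIntegrable_sqrt_one_sub_sq_mul_sin_sq x) intervalIntegrable_const hle

lemma ellipticE_le_ellipticE_of_sq_le {x y : ℝ} (hxy : x ^ 2 ≤ y ^ 2) :
    ellipticE y ≤ ellipticE x :=
  integral_mono_on (by positivity) (intervalIntegrable_sqrt_one_sub_sq_mul_sin_sq y)
    (intervalIntegrable_sqrt_one_sub_sq_mul_sin_sq x) fun u _ =>
      sqrt_le_sqrt (by nlinarith [sq_nonneg (sin u)])

lemma continuous_one_div_sqrt_one_sub_sq_mul_sin_sq {x : ℝ} (hx : x ^ 2 < 1) :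
    Continuous fun u => 1 / √(1 - x ^ 2 * sin u ^ 2) :=
  continuous_const.div (by fun_prop) fun u => (sqrt_pos.2 (one_sub_sq_mul_sin_sq_pos hx u)).ne'

lemma continuous_sq_mul_sin_sq_div_sqrt {x : ℝ} (hx : x ^ 2 < 1) :
    Continuous fun u => x ^ 2 * sin u ^ 2 / √(1 - x ^ 2 * sin u ^ 2) :=
  (by fun_prop : Continuous _).div (by fun_prop) fun u =>
    (sqrt_pos.2 (one_sub_sq_mul_sin_sq_pos hx u)).ne'

lemma ellipticK_sub_ellipticE {x : ℝ} (hx : x ^ 2 < 1) :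
    ellipticK x - ellipticE x = ∫ u in 0..π / 2, x ^ 2 * sin u ^ 2 / √(1 - x ^ 2 * sin u ^ 2) := by
  rw [ellipticK, ellipticE, ← integral_sub
    ((continuous_one_div_sqrt_one_sub_sq_mul_sin_sq hx).intervalIntegrable _ _)
    (intervalIntegrable_sqrt_one_sub_sq_mul_sin_sq x)]
  refine integral_congr fun u _ => ?_
  have hD := one_sub_sq_mul_sin_sq_pos hx u
  have hs : √(1 - x ^ 2 * sin u ^ 2) ≠ 0 := (sqrt_pos.2 hD).ne'
  field_simp
  rw [sq_sqrt hD.le]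
  ring

lemma ellipticK_sub_ellipticE_nonneg {x : ℝ} (hx : x ^ 2 < 1) : 0 ≤ ellipticK x - ellipticE x := by
  rw [ellipticK_sub_ellipticE hx]
  exact integral_nonneg (by positivity) fun u _ => by positivity

lemma ellipticK_sub_ellipticE_lt {x y : ℝ} (hxy : x ^ 2 < y ^ 2) (hy : y ^ 2 < 1) :
    ellipticK x - ellipticE x < ellipticK y - ellipticE y := by
  have hx : x ^ 2 < 1 := hxy.trans hy
  have hmem : ∀ {z : ℝ}, z ^ 2 < 1 → ∀ u, z ^ 2 * sin u ^ 2 ∈ Ico 0 1 := fun hz u =>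
    ⟨by positivity, by linarith [one_sub_sq_mul_sin_sq_pos hz u]⟩
  rw [ellipticK_sub_ellipticE hx, ellipticK_sub_ellipticE hy]
  refine integral_lt_integral_of_continuousOn_of_le_of_exists_lt (by positivity)
    (continuous_sq_mul_sin_sq_div_sqrt hx).continuousOn
    (continuous_sq_mul_sin_sq_div_sqrt hy).continuousOn (fun u _ => ?_) ⟨π / 2, ?_, ?_⟩
  · exact strictMonoOn_div_sqrt_one_sub.monotoneOn (hmem hx u) (hmem hy u)
      (mul_le_mul_of_nonneg_right hxy.le (sq_nonneg _))
  · exact ⟨by positivity, le_rfl⟩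
  · simpa using strictMonoOn_div_sqrt_one_sub (hmem hx (π / 2)) (hmem hy (π / 2)) (by simpa)

noncomputable def ellipticRatio (x : ℝ) : ℝ := (ellipticK x - ellipticE x) / ellipticE x

lemma ellipticRatio_lt_ellipticRatio {x y : ℝ} (hxy : x ^ 2 < y ^ 2) (hy : y ^ 2 < 1) :
    ellipticRatio x < ellipticRatio y := by
  have hEy : 0 < ellipticE y := ellipticE_pos hy.le
  calc ellipticRatio x ≤ (ellipticK x - ellipticE x) / ellipticE y :=
        div_le_div_of_nonneg_left (ellipticK_sub_ellipticE_nonneg (hxy.trans hy)) hEy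
          (ellipticE_le_ellipticE_of_sq_le hxy.le)
    _ < ellipticRatio y := div_lt_div_of_pos_right (ellipticK_sub_ellipticE_lt hxy hy) hEy

lemma ellipticRatio_zero : ellipticRatio 0 = 0 := by
  simp [ellipticRatio, ellipticK, ellipticE]

lemma continuousOn_ellipticRatio : ContinuousOn ellipticRatio (Ioo (-1) 1) :=
  (continuousOn_ellipticK.sub continuous_ellipticE.continuousOn).div
    continuous_ellipticE.continuousOn fun x hx => (ellipticE_pos (by nlinarith [hx.1, hx.2])).ne'

-- `√(1 - x² sin² u) ≤ √(1 - x²) + cos u ≤ √(1 - x²) + (π/2 - u)`, and the reciprocal of the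
-- right-hand side integrates in closed form.
lemma log_le_ellipticK {x : ℝ} (hx : x ^ 2 < 1) :
    log ((√(1 - x ^ 2) + π / 2) / √(1 - x ^ 2)) ≤ ellipticK x := by
  set ε := √(1 - x ^ 2)
  have hε : 0 < ε := sqrt_pos.2 (by linarith)
  have hlog : ∫ u in 0..π / 2, (ε + π / 2 - u)⁻¹ = log ((ε + π / 2) / ε) := by
    rw [integral_comp_sub_left (fun t => t⁻¹), sub_zero, add_sub_cancel_right,
      integral_inv_of_pos hε (by positivity)]
  rw [← hlog]
  refine integral_mono_on (by positivity) ?_ ?_ fun u hu => ?_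
  · refine ContinuousOn.intervalIntegrable (ContinuousOn.inv₀ (by fun_prop) fun u hu => ?_)
    rw [uIcc_of_le (by positivity)] at hu
    linarith [hu.2]
  · exact (continuous_one_div_sqrt_one_sub_sq_mul_sin_sq hx).intervalIntegrable _ _
  have hcos : 0 ≤ cos u := cos_nonneg_of_mem_Icc ⟨by linarith [hu.1, pi_pos], hu.2⟩
  have hε2 : ε ^ 2 = 1 - x ^ 2 := sq_sqrt (by linarith)
  have hsqrt : √(1 - x ^ 2 * sin u ^ 2) ≤ ε + cos u := sqrt_le_iff.2 ⟨by positivity, by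
    nlinarith [sin_sq_add_cos_sq u, sq_nonneg x, mul_nonneg hε.le hcos]⟩
  have hcos_le : cos u ≤ π / 2 - u := by
    simpa only [sin_pi_div_two_sub] using sin_le (x := π / 2 - u) (by linarith [hu.2])
  rw [one_div]
  exact inv_anti₀ (sqrt_pos.2 (one_sub_sq_mul_sin_sq_pos hx u)) (by linarith)

lemma tendsto_sqrt_one_sub_sq_nhdsLT_one :
    Tendsto (fun x : ℝ => √(1 - x ^ 2)) (𝓝[<] 1) (𝓝[>] 0) := by
  refine tendsto_nhdsWithin_of_tendsto_nhds_of_eventually_within _ ?_ ?_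
  · simpa using ((by fun_prop : Continuous fun x : ℝ => √(1 - x ^ 2)).tendsto 1).mono_left
      nhdsWithin_le_nhds
  · filter_upwards [Ioo_mem_nhdsLT (show (0 : ℝ) < 1 by norm_num)] with x hx
    exact sqrt_pos.2 (by nlinarith [hx.1, hx.2])

lemma tendsto_log_add_div_nhdsGT_zero {c : ℝ} (hc : 0 < c) :
    Tendsto (fun ε : ℝ => log ((ε + c) / ε)) (𝓝[>] 0) atTop := by
  refine tendsto_log_atTop.comp ?_
  have : Tendsto (fun ε : ℝ => 1 + c * ε⁻¹) (𝓝[>] 0) atTop :=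
    tendsto_atTop_add_const_left _ _ (tendsto_inv_nhdsGT_zero.const_mul_atTop hc)
  refine this.congr' ?_
  filter_upwards [self_mem_nhdsWithin] with ε (hε : 0 < ε)
  field_simp

lemma tendsto_ellipticK_nhdsLT_one : Tendsto ellipticK (𝓝[<] 1) atTop := by
  refine tendsto_atTop_mono' _ ?_
    ((tendsto_log_add_div_nhdsGT_zero (c := π / 2) (by positivity)).comp
      tendsto_sqrt_one_sub_sq_nhdsLT_one)
  filter_upwards [Ioo_mem_nhdsLT (show (-1 : ℝ) < 1 by norm_num)] with x hx
  exact log_le_ellipticK (by nlinarith [hx.1, hx.2])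

lemma tendsto_ellipticRatio_nhdsLT_one : Tendsto ellipticRatio (𝓝[<] 1) atTop := by
  have hK : Tendsto (fun x => ellipticK x / (π / 2) - 1) (𝓝[<] 1) atTop :=
    tendsto_atTop_add_const_right _ _ (tendsto_ellipticK_nhdsLT_one.atTop_div_const (by positivity))
  refine tendsto_atTop_mono' _ ?_ hK
  filter_upwards [Ioo_mem_nhdsLT (show (-1 : ℝ) < 1 by norm_num)] with x hx
  have hx2 : x ^ 2 < 1 := by nlinarith [hx.1, hx.2]
  have hE := ellipticE_pos hx2.le
  rw [ellipticRatio, sub_div, div_self hE.ne']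
  gcongr
  · linarith [ellipticK_sub_ellipticE_nonneg hx2]
  · exact ellipticE_le_pi_div_two x

lemma cos_half_mem_Ioo {γ : ℝ} (hγ : γ ∈ Ioo 0 π) : cos (γ / 2) ∈ Ioo 0 1 :=
  ⟨cos_pos_of_mem_Ioo ⟨by linarith [hγ.1, pi_pos], by linarith [hγ.2]⟩, by
    simpa using cos_lt_cos_of_nonneg_of_le_pi le_rfl (by linarith [hγ.2, pi_pos])
      (half_pos hγ.1)⟩

lemma strictAntiOn_ellipticRatio_cos_half :
    StrictAntiOn (fun γ => ellipticRatio (cos (γ / 2))) (Ioo 0 π) := by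
  intro a ha b hb hab
  have hcos : cos (b / 2) < cos (a / 2) :=
    cos_lt_cos_of_nonneg_of_le_pi (by linarith [ha.1]) (by linarith [hb.2, pi_pos]) (by linarith)
  have hb0 := (cos_half_mem_Ioo hb).1
  have ha1 := (cos_half_mem_Ioo ha).2
  exact ellipticRatio_lt_ellipticRatio (by nlinarith) (by nlinarith)

lemma continuousOn_ellipticRatio_cos_half :
    ContinuousOn (fun γ => ellipticRatio (cos (γ / 2))) (Ioo 0 π) :=
  continuousOn_ellipticRatio.comp (by fun_prop) fun _ hγ =>
    Ioo_subset_Ioo_left (by norm_num) (cos_half_mem_Ioo hγ)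

lemma tendsto_cos_half_nhdsGT_zero : Tendsto (fun γ => cos (γ / 2)) (𝓝[>] 0) (𝓝[<] 1) := by
  refine tendsto_nhdsWithin_of_tendsto_nhds_of_eventually_within _ ?_ ?_
  · simpa using ((by fun_prop : Continuous fun γ : ℝ => cos (γ / 2)).tendsto 0).mono_left
      nhdsWithin_le_nhds
  · filter_upwards [Ioo_mem_nhdsGT pi_pos] with γ hγ
    exact (cos_half_mem_Ioo hγ).2

lemma tendsto_ellipticRatio_cos_half_nhdsLT_pi :
    Tendsto (fun γ => ellipticRatio (cos (γ / 2))) (𝓝[<] π) (𝓝 0) := by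
  have hcont : ContinuousAt ellipticRatio (cos (π / 2)) := by
    rw [cos_pi_div_two]
    exact continuousOn_ellipticRatio.continuousAt (Ioo_mem_nhds (by norm_num) (by norm_num))
  have := hcont.comp (f := fun γ : ℝ => cos (γ / 2)) (x := π) (by fun_prop)
  simpa [Function.comp_def, ellipticRatio_zero] using this.tendsto.mono_left nhdsWithin_le_nhds

/-- The ratio `K₊(γ)/K₋(γ) = (K(cos(γ/2)) - E(cos(γ/2)))/E(cos(γ/2))` is strictly
decreasing on `(0,π)`, tends to `+∞` at `0⁺`, tends to `0` at `π⁻`, and hence attains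
every positive value exactly once. -/
theorem ratio_Kplus_Kminus (ratio : ℝ → ℝ)
    (hratio : ∀ γ : ℝ, ratio γ =
      (ellipticK (Real.cos (γ/2)) - ellipticE (Real.cos (γ/2)))
        / ellipticE (Real.cos (γ/2))) :
    StrictAntiOn ratio (Set.Ioo 0 Real.pi) ∧
    Tendsto ratio (nhdsWithin 0 (Set.Ioi 0)) atTop ∧
    Tendsto ratio (nhdsWithin Real.pi (Set.Iio Real.pi)) (nhds 0) ∧
    ∀ ρ : ℝ, 0 < ρ → ∃! γ : ℝ, γ ∈ Set.Ioo 0 Real.pi ∧ ratio γ = ρ := by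
  obtain rfl : ratio = fun γ => ellipticRatio (cos (γ / 2)) := funext hratio
  have hanti := strictAntiOn_ellipticRatio_cos_half
  have hzero : Tendsto (fun γ => ellipticRatio (cos (γ / 2))) (𝓝[>] 0) atTop :=
    tendsto_ellipticRatio_nhdsLT_one.comp tendsto_cos_half_nhdsGT_zero
  have hpi := tendsto_ellipticRatio_cos_half_nhdsLT_pi
  refine ⟨hanti, hzero, hpi, fun ρ hρ => ?_⟩
  obtain ⟨γ, hγ, hγρ⟩ := isPreconnected_Ioo.intermediate_value_Ioi
    (le_principal_iff.2 (Ioo_mem_nhdsLT pi_pos)) (le_principal_iff.2 (Ioo_mem_nhdsGT pi_pos))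
    continuousOn_ellipticRatio_cos_half hpi hzero hρ
  exact ⟨γ, ⟨hγ, hγρ⟩, fun δ hδ => hanti.injOn hδ.1 hγ (hδ.2.trans hγρ.symm)⟩
end
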